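/- Let p : X → Y be a spread that restricts to a covering map X₁ → Y₁ between portly subsets X₁ ⊆ X and Y₁ ⊆ Y. Then p is a complete spread if and only if for every path γ : [0,1] → Y, every partial lift γ̂ : [0,1) → X₁ of γ extends continuously to a lift [0,1] → X of γ. -/

import Mathlib

/-- A subset `U` of a topological space `X` is *portly* if it is open, dense, and
locally connected in `X`. -/
def Portly (X : Type*) [TopologicalSpace X] (U : Set X) : Prop :=
  IsOpen U ∧ Dense U ∧ ∀ W : Set X, IsOpen W → IsConnected W → IsConnected (W ∩ U)

/-- `V` is a connected component of `S`. -/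
def IsComponentOf {X : Type*} [TopologicalSpace X] (V S : Set X) : Prop :=
  ∃ x ∈ S, V = connectedComponentIn S x

/-- A *spread* is a continuous map such that the connected components of preimages of
open subsets of the base form a basis for the topology of the total space. -/
def IsSpread {X Y : Type*} [TopologicalSpace X] [TopologicalSpace Y] (p : X → Y) : Prop :=
  Continuous p ∧ TopologicalSpace.IsTopologicalBasis
    {V : Set X | ∃ U : Set Y, IsOpen U ∧ IsComponentOf V (p ⁻¹' U)}

/-- `p` maps `V` homeomorphically onto `U`. -/
def MapsHomeomorphicallyOnto {X Y : Type*} [TopologicalSpace X] [TopologicalSpace Y]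
    (p : X → Y) (V : Set X) (U : Set Y) : Prop :=
  ∃ h : V ≃ₜ U, ∀ v : V, (h v : Y) = p v

/-- The ordinary locus in the base of a spread: points admitting an open neighborhood
evenly covered by `p`. -/
def OrdBase {X Y : Type*} [TopologicalSpace X] [TopologicalSpace Y] (p : X → Y) : Set Y :=
  {y | ∃ U : Set Y, IsOpen U ∧ y ∈ U ∧
    ∀ V : Set X, IsComponentOf V (p ⁻¹' U) → MapsHomeomorphicallyOnto p V U}

/-- The ordinary locus in the total space of a spread. -/
def OrdTotal {X Y : Type*} [TopologicalSpace X] [TopologicalSpace Y] (p : X → Y) : Set X :=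
  p ⁻¹' OrdBase p

/-- A *complete* spread: every monotone choice of connected components of preimages of
connected open neighborhoods of a point of the closure of the image has nonempty
intersection. -/
def IsCompleteSpread {X Y : Type*} [TopologicalSpace X] [TopologicalSpace Y]
    (p : X → Y) : Prop :=
  IsSpread p ∧ ∀ y ∈ closure (Set.range p),
    ∀ χ : {U : Set Y // IsOpen U ∧ IsConnected U ∧ y ∈ U} → Set X,
      (∀ U, IsComponentOf (χ U) (p ⁻¹' U.1)) →
      (∀ U V, U.1 ⊆ V.1 → χ U ⊆ χ V) →
      (⋂ U, χ U).Nonempty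

/-- A *branched covering* is a complete surjective spread between connected spaces whose
ordinary loci are portly. -/
def IsBranchedCovering {X Y : Type*} [TopologicalSpace X] [TopologicalSpace Y]
    (p : X → Y) : Prop :=
  IsCompleteSpread p ∧ Function.Surjective p ∧ ConnectedSpace X ∧ ConnectedSpace Y ∧
    Portly X (OrdTotal p) ∧ Portly Y (OrdBase p)

/-!
For a partial lift `γhat` of `γ`, each connected open neighbourhood `U` of `γ 1` contains
`p (γhat t)` for `t` near `1`, and this connected tail of `γhat` lies in a single component `χ U`
of `p⁻¹ U`. The choice `U ↦ χ U` is monotone, so completeness gives a point `x` in all of them;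
`p x = γ 1`, and since the components of preimages form a basis at `x`, `γhat t → x`.

Conversely, let `χ` be a monotone choice over `y` and `Uₙ` a decreasing basis of connected open
neighbourhoods of `y`. Each `χ Uₙ ∩ X₁` is open and connected because `X₁` is portly, hence path
connected, and the sets decrease; concatenating paths joining them gives a partial lift in `X₁` of
a path ending at `y`. Its extension `Γ` satisfies `Γ 1 ∈ χ U` for every `U`: some `Uₙ ⊆ U`, and
`Γ [a, 1]` is a connected subset of `p⁻¹ U` meeting `χ Uₙ ⊆ χ U` once `a` is close to `1`.
-/

open Set Filter Topology unitInterval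

instance : Nonempty {t : I // (t : ℝ) < 1} := ⟨⟨0, zero_lt_one⟩⟩

/-- As `{t : I // (t : ℝ) < 1}` is `Iio (1 : I)`, its filter `atTop` is the approach to `1` from
the left. -/
theorem comap_val_nhdsLT_one : comap ((↑) : {t : I // (t : ℝ) < 1} → I) (𝓝[<] 1) = atTop :=
  comap_coe_Iio_nhdsLT 1

theorem map_val_atTop_lt_one : map ((↑) : {t : I // (t : ℝ) < 1} → I) atTop = 𝓝[<] 1 := by
  rw [← comap_val_nhdsLT_one, map_comap_of_mem]
  rw [Subtype.range_val_subtype]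
  exact self_mem_nhdsWithin

theorem tendsto_val_atTop_nhdsLT_one :
    Tendsto ((↑) : {t : I // (t : ℝ) < 1} → I) atTop (𝓝[<] 1) :=
  map_val_atTop_lt_one.le

theorem isPreconnected_Ici_lt_one (a : {t : I // (t : ℝ) < 1}) :
    IsPreconnected (Ici a) := by
  refine Topology.IsInducing.subtypeVal.isPreconnected_image.mp ?_
  convert isPreconnected_Ico (a := a.1) (b := 1) using 1
  ext s
  exact ⟨fun ⟨t, ht, hts⟩ => hts ▸ ⟨ht, t.2⟩, fun hs => ⟨⟨s, hs.2⟩, hs.1, rfl⟩⟩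

section ExtendAtOne

variable {Z W : Type*}

noncomputable def extendAtOne (g : {t : I // (t : ℝ) < 1} → Z) (z : Z) (t : I) : Z :=
  if h : (t : ℝ) < 1 then g ⟨t, h⟩ else z

variable {g : {t : I // (t : ℝ) < 1} → Z} {z : Z}

theorem extendAtOne_of_lt {t : I} (h : (t : ℝ) < 1) : extendAtOne g z t = g ⟨t, h⟩ :=
  dif_pos h

@[simp]
theorem extendAtOne_one : extendAtOne g z 1 = z :=
  dif_neg (lt_irrefl 1)

theorem extendAtOne_comp_val : extendAtOne g z ∘ Subtype.val = g :=
  funext fun t => extendAtOne_of_lt t.2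

theorem extendAtOne_mem {s : Set Z} {t : I} (hg : ∀ h : (t : ℝ) < 1, g ⟨t, h⟩ ∈ s)
    (hz : z ∈ s) : extendAtOne g z t ∈ s := by
  unfold extendAtOne
  split_ifs with h
  exacts [hg h, hz]

theorem apply_extendAtOne (f : Z → W) (t : I) :
    f (extendAtOne g z t) = extendAtOne (f ∘ g) (f z) t := by
  unfold extendAtOne
  split_ifs <;> rfl

theorem extendAtOne_val_one (γ : I → Z) : extendAtOne (fun t => γ t.1) (γ 1) = γ := by
  funext t
  unfold extendAtOne
  split_ifs with h
  · rfl
  · rw [show t = 1 from Subtype.ext (t.2.2.antisymm (not_lt.mp h))]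

theorem continuous_extendAtOne [TopologicalSpace Z] (hg : Continuous g)
    (hz : Tendsto g atTop (𝓝 z)) : Continuous (extendAtOne g z) := by
  have hT : IsOpenEmbedding ((↑) : {t : I // (t : ℝ) < 1} → I) :=
    (isOpen_Iio.preimage continuous_subtype_val).isOpenEmbedding_subtypeVal
  refine continuous_iff_continuousAt.mpr fun t => ?_
  by_cases ht : (t : ℝ) < 1
  · rw [← hT.continuousAt_iff (x := ⟨t, ht⟩), extendAtOne_comp_val]
    exact hg.continuousAt
  · obtain rfl : t = 1 := Subtype.ext (t.2.2.antisymm (not_lt.mp ht))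
    rw [continuousAt_iff_punctured_nhds, extendAtOne_one]
    have h1 : ({1}ᶜ : Set I) = Iio 1 := Iio_top.symm
    rw [h1, ← map_val_atTop_lt_one, tendsto_map'_iff, extendAtOne_comp_val]
    exact hz

end ExtendAtOne

section Concat

variable {Z : Type*} [TopologicalSpace Z] {x : ℕ → Z}

/-- The paths `q n` traversed one after another, `q n` on `[n, n + 1]`. -/
noncomputable def Path.concatSeq (q : ∀ n, Path (x n) (x (n + 1))) (t : ℝ) : Z :=
  (q ⌊t⌋₊).extend (t - ⌊t⌋₊)

theorem Path.concatSeq_mem_range (q : ∀ n, Path (x n) (x (n + 1))) (t : ℝ) :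
    concatSeq q t ∈ range (q ⌊t⌋₊) := by
  rw [← Path.extend_range]
  exact mem_range_self _

theorem Path.concatSeq_eq_of_mem_Icc (q : ∀ n, Path (x n) (x (n + 1))) {n : ℕ} {t : ℝ}
    (ht : t ∈ Icc (n : ℝ) (n + 1)) : concatSeq q t = (q n).extend (t - n) := by
  have ht0 : 0 ≤ t := (Nat.cast_nonneg n).trans ht.1
  rcases ht.2.lt_or_eq with hlt | rfl
  · rw [concatSeq, (Nat.floor_eq_iff ht0).mpr ⟨ht.1, hlt⟩]
  · have hfloor : ⌊(n : ℝ) + 1⌋₊ = n + 1 := by exact_mod_cast Nat.floor_natCast (n + 1)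
    rw [concatSeq, hfloor, Nat.cast_succ, sub_self, add_sub_cancel_left, Path.extend_zero,
      Path.extend_one]

theorem Path.continuousOn_concatSeq (q : ∀ n, Path (x n) (x (n + 1))) :
    ContinuousOn (concatSeq q) (Ici 0) := by
  have hfin : LocallyFinite fun n : ℕ => Icc (n : ℝ) (n + 1) := by
    have hℤ : LocallyFinite fun n : ℤ => Icc (n : ℝ) (n + 1) :=
      locallyFinite_Icc_of_tendsto (tendsto_intCast_atTop_atTop)
        (tendsto_atBot_add_const_right _ _ (tendsto_intCast_atBot_iff.2 tendsto_id))
    simpa [Function.comp_def] using hℤ.comp_injective Nat.cast_injective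
  refine (hfin.continuousOn_iUnion (fun n => isClosed_Icc) fun n => ?_).mono fun t ht => ?_
  · exact ((q n).continuous_extend.comp (continuous_sub_right (n : ℝ))).continuousOn.congr
      fun t ht => concatSeq_eq_of_mem_Icc q ht
  · exact mem_iUnion.mpr ⟨⌊t⌋₊, Nat.floor_le ht, (Nat.lt_floor_add_one t).le⟩

theorem Antitone.exists_continuousOn_Ici_forall_ge_mem {S : ℕ → Set Z} (hS : Antitone S)
    (hpc : ∀ n, IsPathConnected (S n)) :
    ∃ f : ℝ → Z, ContinuousOn f (Ici 0) ∧ ∀ (n : ℕ) (s : ℝ), (n : ℝ) ≤ s → f s ∈ S n := by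
  choose x hx using fun n => (hpc n).nonempty
  have hjoin : ∀ n, JoinedIn (S n) (x n) (x (n + 1)) := fun n =>
    (hpc n).joinedIn _ (hx n) _ (hS n.le_succ (hx (n + 1)))
  refine ⟨Path.concatSeq fun n => (hjoin n).somePath, Path.continuousOn_concatSeq _,
    fun n s hns => ?_⟩
  obtain ⟨r, hr⟩ := Path.concatSeq_mem_range (fun n => (hjoin n).somePath) s
  rw [← hr]
  exact hS (Nat.le_floor hns) ((hjoin _).somePath_mem r)

end Concat

section Components

variable {X Y : Type*} [TopologicalSpace X] [TopologicalSpace Y]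

theorem IsComponentOf.subset {V S : Set X} (h : IsComponentOf V S) : V ⊆ S := by
  obtain ⟨x, -, rfl⟩ := h
  exact connectedComponentIn_subset S x

theorem IsComponentOf.isConnected {V S : Set X} (h : IsComponentOf V S) : IsConnected V := by
  obtain ⟨x, hx, rfl⟩ := h
  exact isConnected_connectedComponentIn_iff.mpr hx

theorem IsComponentOf.isOpen [LocallyConnectedSpace X] {V S : Set X} (h : IsComponentOf V S)
    (hS : IsOpen S) : IsOpen V := by
  obtain ⟨x, -, rfl⟩ := h
  exact hS.connectedComponentIn

theorem IsComponentOf.eq_of_mem {V S : Set X} (h : IsComponentOf V S) {x : X} (hx : x ∈ V) :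
    V = connectedComponentIn S x := by
  obtain ⟨x₀, -, rfl⟩ := h
  exact connectedComponentIn_eq hx

theorem connectedComponentIn_subset_of_mem {S S' : Set X} (hSS' : S ⊆ S') {x x' z : X}
    (hz : z ∈ connectedComponentIn S x) (hz' : z ∈ connectedComponentIn S' x') :
    connectedComponentIn S x ⊆ connectedComponentIn S' x' := by
  rw [connectedComponentIn_eq hz, connectedComponentIn_eq hz']
  exact connectedComponentIn_mono z hSS'

theorem Portly.isPathConnected_inter [LocallyPathConnectedSpace X] {A W : Set X}
    (hA : Portly X A) (hW : IsOpen W) (hWc : IsConnected W) : IsPathConnected (W ∩ A) :=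
  (hW.inter hA.1).isConnected_iff_isPathConnected.mp (hA.2.2 W hW hWc)

theorem IsSpread.exists_connectedComponentIn_subset [LocallyConnectedSpace Y] {p : X → Y}
    (hp : IsSpread p) {x : X} {N : Set X} (hN : N ∈ 𝓝 x) :
    ∃ U, IsOpen U ∧ IsConnected U ∧ p x ∈ U ∧ connectedComponentIn (p ⁻¹' U) x ⊆ N := by
  obtain ⟨V, ⟨U₀, hU₀, hV⟩, hxV, hVN⟩ := hp.2.mem_nhds_iff.mp hN
  rw [hV.eq_of_mem hxV] at hVN
  obtain ⟨U, ⟨hU, hxU, hUc⟩, hUU₀⟩ :=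
    (LocallyConnectedSpace.open_connected_basis (p x)).mem_iff.mp
      (hU₀.mem_nhds (hV.subset hxV))
  exact ⟨U, hU, hUc, hxU, (connectedComponentIn_mono x (preimage_mono hUU₀)).trans hVN⟩

theorem exists_antitone_basis_isOpen_isConnected [FirstCountableTopology Y]
    [LocallyConnectedSpace Y] (y : Y) :
    ∃ U : ℕ → Set Y, (𝓝 y).HasAntitoneBasis U ∧ ∀ n, IsOpen (U n) ∧ IsConnected (U n) := by
  obtain ⟨B, hB⟩ := (𝓝 y).exists_antitone_basis
  have hyB : ∀ n, y ∈ interior (B n) := fun n => mem_interior_iff_mem_nhds.mpr (hB.mem n)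
  refine ⟨fun n => connectedComponentIn (interior (B n)) y, ⟨hB.1.to_hasBasis' ?_ ?_, ?_⟩,
    fun n => ⟨isOpen_interior.connectedComponentIn,
      isConnected_connectedComponentIn_iff.mpr (hyB n)⟩⟩
  · exact fun n _ => ⟨n, trivial,
      (connectedComponentIn_subset _ _).trans interior_subset⟩
  · exact fun n _ =>
      isOpen_interior.connectedComponentIn.mem_nhds (mem_connectedComponentIn (hyB n))
  · exact fun m n hmn => connectedComponentIn_mono y (interior_mono (hB.antitone hmn))

end Components

section Lifting

variable {X Y : Type*} [TopologicalSpace X] [TopologicalSpace Y]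

theorem tendsto_inv_one_sub_atTop :
    Tendsto (fun t : {t : I // (t : ℝ) < 1} => (1 - (t : ℝ))⁻¹) atTop atTop := by
  refine tendsto_inv_nhdsGT_zero.comp (tendsto_nhdsWithin_iff.mpr
    ⟨?_, Eventually.of_forall fun t => sub_pos.mpr t.2⟩)
  have h1sub : Continuous fun s : I => 1 - (s : ℝ) := continuous_const.sub continuous_subtype_val
  exact (h1sub.tendsto' 1 0 (sub_self 1)).comp
    (tendsto_val_atTop_nhdsLT_one.mono_right nhdsWithin_le_nhds)

theorem Antitone.exists_continuous_forall_eventually_mem {Z : Type*} [TopologicalSpace Z]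
    {S : ℕ → Set Z} (hS : Antitone S) (hpc : ∀ n, IsPathConnected (S n)) :
    ∃ g : {t : I // (t : ℝ) < 1} → Z, Continuous g ∧ (∀ t, g t ∈ S 0) ∧
      ∀ n, ∀ᶠ t in atTop, g t ∈ S n := by
  obtain ⟨f, hf, hfS⟩ := hS.exists_continuousOn_Ici_forall_ge_mem hpc
  have hr : ∀ t : {t : I // (t : ℝ) < 1}, (0 : ℝ) ≤ (1 - (t : ℝ))⁻¹ := fun t =>
    inv_nonneg.mpr (sub_pos.mpr t.2).le
  refine ⟨fun t => f (1 - (t : ℝ))⁻¹, hf.comp_continuous ?_ hr, fun t => hfS 0 _ (Nat.cast_zero.trans_le (hr t)),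
    fun n => (tendsto_inv_one_sub_atTop.eventually_ge_atTop (n : ℝ)).mono fun t => hfS n _⟩
  exact (continuous_const.sub (continuous_subtype_val.comp continuous_subtype_val)).inv₀
    fun t => (sub_pos.mpr t.2).ne'

theorem forall_ge_mem_connectedComponentIn {g : {t : I // (t : ℝ) < 1} → X}
    (hg : Continuous g) {S : Set X} {a : {t : I // (t : ℝ) < 1}} (ha : ∀ t ≥ a, g t ∈ S) :
    ∀ t ≥ a, g t ∈ connectedComponentIn S (g a) := fun _ ht =>
  ((isPreconnected_Ici_lt_one a).image g hg.continuousOn).subset_connectedComponentIn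
    (mem_image_of_mem g self_mem_Ici) (image_subset_iff.mpr ha) (mem_image_of_mem g ht)

theorem IsCompleteSpread.exists_tendsto [T1Space Y] [LocallyConnectedSpace Y] {p : X → Y}
    (hc : IsCompleteSpread p) {g : {t : I // (t : ℝ) < 1} → X} (hg : Continuous g) {y : Y}
    (hy : Tendsto (p ∘ g) atTop (𝓝 y)) : ∃ x, p x = y ∧ Tendsto g atTop (𝓝 x) := by
  choose a ha using fun U : {U : Set Y // IsOpen U ∧ IsConnected U ∧ y ∈ U} =>
    eventually_atTop.mp (hy (U.2.1.mem_nhds U.2.2.2))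
  set χ := fun U => connectedComponentIn (p ⁻¹' U.1) (g (a U))
  have hχ : ∀ U, ∀ᶠ t in atTop, g t ∈ χ U := fun U =>
    eventually_atTop.mpr ⟨a U, forall_ge_mem_connectedComponentIn hg (ha U)⟩
  have hmono : ∀ U V, U.1 ⊆ V.1 → χ U ⊆ χ V := fun U V hUV =>
    let ⟨_, htU, htV⟩ := ((hχ U).and (hχ V)).exists
    connectedComponentIn_subset_of_mem (preimage_mono hUV) htU htV
  have hy_mem : y ∈ closure (range p) :=
    mem_closure_of_tendsto hy (.of_forall fun _ => mem_range_self _)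
  obtain ⟨x, hx⟩ := hc.2 y hy_mem χ (fun U => ⟨g (a U), ha U _ le_rfl, rfl⟩) hmono
  rw [mem_iInter] at hx
  have hpx : p x = y := by
    refine (specializes_iff_pure.mpr ?_).eq
    exact (LocallyConnectedSpace.open_connected_basis y).ge_iff.mpr fun U hU =>
      mem_pure.mpr (connectedComponentIn_subset (p ⁻¹' U) _ (hx ⟨U, hU.1, hU.2.2, hU.2.1⟩))
  refine ⟨x, hpx, fun N hN => ?_⟩
  obtain ⟨U, hU, hUc, hxU, hUN⟩ := hc.1.exists_connectedComponentIn_subset hN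
  have hxχ := hx ⟨U, hU, hUc, hpx ▸ hxU⟩
  exact (hχ _).mono fun t ht => hUN (connectedComponentIn_eq hxχ ▸ ht)

theorem IsCompleteSpread.exists_lift_extend [T1Space Y] [LocallyConnectedSpace Y] {p : X → Y}
    (hc : IsCompleteSpread p) {γ : C(I, Y)} {γhat : {t : I // (t : ℝ) < 1} → X}
    (hγhat : Continuous γhat) (hlift : ∀ t, p (γhat t) = γ t.1) :
    ∃ Γ : I → X, Continuous Γ ∧ (∀ t, p (Γ t) = γ t) ∧
      ∀ (t : I) (h : (t : ℝ) < 1), Γ t = γhat ⟨t, h⟩ := by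
  have hpγ : p ∘ γhat = fun t => γ t.1 := funext hlift
  obtain ⟨x, hpx, hx⟩ := hc.exists_tendsto hγhat (y := γ 1) <| hpγ ▸
    (γ.continuous.tendsto 1).comp (tendsto_val_atTop_nhdsLT_one.mono_right nhdsWithin_le_nhds)
  refine ⟨extendAtOne γhat x, continuous_extendAtOne hγhat hx, fun t => ?_,
    fun t h => extendAtOne_of_lt h⟩
  rw [apply_extendAtOne p, hpx, hpγ, extendAtOne_val_one]

theorem isCompleteSpread_of_forall_lift_extend [FirstCountableTopology Y]
    [LocallyConnectedSpace Y] [LocallyPathConnectedSpace X] {p : X → Y} (hp : IsSpread p)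
    {X₁ : Set X} (hX₁ : Portly X X₁)
    (H : ∀ γ : C(I, Y), ∀ γhat : {t : I // (t : ℝ) < 1} → X,
      Continuous γhat → (∀ t, γhat t ∈ X₁) → (∀ t, p (γhat t) = γ t.1) →
      ∃ Γ : I → X, Continuous Γ ∧ (∀ t, p (Γ t) = γ t) ∧
        ∀ (t : I) (h : (t : ℝ) < 1), Γ t = γhat ⟨t, h⟩) :
    IsCompleteSpread p := by
  refine ⟨hp, fun y _ χ hχ hmono => ?_⟩
  obtain ⟨U, hU, hUoc⟩ := exists_antitone_basis_isOpen_isConnected y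
  let u : ℕ → {U : Set Y // IsOpen U ∧ IsConnected U ∧ y ∈ U} := fun n =>
    ⟨U n, (hUoc n).1, (hUoc n).2, mem_of_mem_nhds (hU.mem n)⟩
  obtain ⟨γhat, hγhat, hγhatX₁, htail⟩ := Antitone.exists_continuous_forall_eventually_mem
    (S := fun n => χ (u n) ∩ X₁)
    (fun m n hmn => inter_subset_inter_left _ (hmono _ _ (hU.antitone hmn)))
    (fun n => hX₁.isPathConnected_inter ((hχ (u n)).isOpen ((hUoc n).1.preimage hp.1))
      (hχ (u n)).isConnected)
  have hpγ : Tendsto (p ∘ γhat) atTop (𝓝 y) := hU.1.tendsto_right_iff.mpr fun n _ =>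
    (htail n).mono fun t ht => (hχ (u n)).subset ht.1
  let γ : C(I, Y) := ⟨extendAtOne (p ∘ γhat) y, continuous_extendAtOne (hp.1.comp hγhat) hpγ⟩
  obtain ⟨Γ, hΓ, hpΓ, hΓγ⟩ := H γ γhat hγhat (fun t => (hγhatX₁ t).2)
    (fun t => (extendAtOne_of_lt (g := p ∘ γhat) (z := y) t.2).symm)
  refine ⟨Γ 1, mem_iInter.mpr fun v => ?_⟩
  obtain ⟨n, -, hnv⟩ := hU.1.mem_iff.mp (v.2.1.mem_nhds v.2.2.2)
  obtain ⟨a, ha⟩ := eventually_atTop.mp (htail n)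
  have hΓa : Γ a ∈ χ (u n) := hΓγ a a.2 ▸ (ha a le_rfl).1
  rw [(hχ v).eq_of_mem (hmono _ _ hnv hΓa)]
  refine (isPreconnected_Icc.image Γ hΓ.continuousOn).subset_connectedComponentIn
    (mem_image_of_mem Γ ⟨le_rfl, le_one a.1⟩) ?_ (mem_image_of_mem Γ ⟨le_one a.1, le_rfl⟩)
  rintro _ ⟨s, hs, rfl⟩
  rw [mem_preimage, hpΓ]
  exact extendAtOne_mem (fun h => hnv ((hχ (u n)).subset (ha ⟨s, h⟩ hs.1).1)) v.2.2.2

end Lifting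

theorem stmt13_general {X Y : Type*} [TopologicalSpace X] [TopologicalSpace Y]
    [T2Space Y] [FirstCountableTopology Y]
    [LocallyPathConnectedSpace X] [LocallyPathConnectedSpace Y]
    (p : X → Y) (hp : IsSpread p) (X₁ : Set X)
    (hX₁ : Portly X X₁) :
    IsCompleteSpread p ↔
      ∀ γ : C(unitInterval, Y), ∀ γhat : {t : unitInterval // (t : ℝ) < 1} → X,
        Continuous γhat → (∀ t, γhat t ∈ X₁) → (∀ t, p (γhat t) = γ t.1) →
        ∃ Γ : unitInterval → X, Continuous Γ ∧ (∀ t, p (Γ t) = γ t) ∧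
          ∀ (t : unitInterval) (h : (t : ℝ) < 1), Γ t = γhat ⟨t, h⟩ :=
  ⟨fun hc _ _ hγhat _ hlift => hc.exists_lift_extend hγhat hlift,
    isCompleteSpread_of_forall_lift_extend hp hX₁⟩

theorem stmt13 {X Y : Type*} [TopologicalSpace X] [TopologicalSpace Y]
    [T2Space X] [T2Space Y] [FirstCountableTopology X] [FirstCountableTopology Y]
    [LocallyPathConnectedSpace X] [LocallyPathConnectedSpace Y]
    [ConnectedSpace X] [ConnectedSpace Y]
    (p : X → Y) (hp : IsSpread p) (X₁ : Set X) (Y₁ : Set Y)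
    (hX₁ : Portly X X₁) (hY₁ : Portly Y Y₁)
    (hmap : Set.MapsTo p X₁ Y₁)
    (hcov : IsCoveringMap (Set.MapsTo.restrict p X₁ Y₁ hmap)) :
    IsCompleteSpread p ↔
      ∀ γ : C(unitInterval, Y), ∀ γhat : {t : unitInterval // (t : ℝ) < 1} → X,
        Continuous γhat → (∀ t, γhat t ∈ X₁) → (∀ t, p (γhat t) = γ t.1) →
        ∃ Γ : unitInterval → X, Continuous Γ ∧ (∀ t, p (Γ t) = γ t) ∧
          ∀ (t : unitInterval) (h : (t : ℝ) < 1), Γ t = γhat ⟨t, h⟩ :=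
  stmt13_general p hp X₁ hX₁
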